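/- arXiv:1310.8156 — 3 statements merged into one kernel-verified Lean document; each statement's English description precedes it below -/
import Mathlib

section
/- For any rigid tree grammar G and any term t in the language of G, there exists a derivation of t in G which uses at most one production rule with left-hand side β for each rigid non-terminal β. -/
/-- Terms (trees) over a ranked alphabet `F` and non-terminals `N`. -/
inductive Tm (F N : Type) : Type
  | func : F → List (Tm F N) → Tm F N
  | nt : N → Tm F N

namespace Tm

variable {F N N' : Type}

/-- The subterm of a term at a position (a list of natural numbers), if it exists. -/
def at? : Tm F N → List Nat → Option (Tm F N)
  | t, [] => some t
  | nt _, _ :: _ => none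
  | func _ args, i :: p =>
      match args[i]? with
      | some a => a.at? p
      | none => none
  termination_by t p => p.length

/-- The non-terminal `β` occurs at position `p` in a term. -/
inductive OccursAt (β : N) : Tm F N → List Nat → Prop
  | here : OccursAt β (nt β) []
  | there {f : F} {args : List (Tm F N)} {i : Nat} {a : Tm F N} {p : List Nat} :
      args[i]? = some a → OccursAt β a p → OccursAt β (func f args) (i :: p)

/-- The non-terminal `β` occurs in the term `t`. -/
def Occurs (β : N) (t : Tm F N) : Prop := ∃ p, OccursAt β t p

/-- A term is ground if it contains no non-terminals. -/
inductive IsGround : Tm F N → Prop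
  | func {f : F} {args : List (Tm F N)} : (∀ a ∈ args, IsGround a) → IsGround (func f args)

/-- Substitution of the term `s` for the non-terminal `β`. -/
def subst [DecidableEq N] (β : N) (s : Tm F N) : Tm F N → Tm F N
  | nt γ => if γ = β then s else nt γ
  | func f args => func f (args.attach.map fun a => subst β s a.1)
  decreasing_by all_goals (simp only [Tm.func.sizeOf_spec]; have := List.sizeOf_lt_of_mem a.2; omega)

/-- Renaming of non-terminals. -/
def mapNT (σ : N → N') : Tm F N → Tm F N'
  | nt γ => nt (σ γ)
  | func f args => func f (args.attach.map fun a => mapNT σ a.1)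
  decreasing_by all_goals (simp only [Tm.func.sizeOf_spec]; have := List.sizeOf_lt_of_mem a.2; omega)

/-- The size (number of symbol occurrences) of a term. -/
def size : Tm F N → Nat
  | nt _ => 1
  | func _ args => 1 + (args.attach.map fun a => size a.1).sum
  decreasing_by all_goals (simp only [Tm.func.sizeOf_spec]; have := List.sizeOf_lt_of_mem a.2; omega)

end Tm

/-- One rewrite step using the single production `pr`: replace one occurrence of the
    left-hand side non-terminal by the right-hand side. -/
inductive ProdStep {F N : Type} : (N × Tm F N) → Tm F N → Tm F N → Prop
  | here {β : N} {t : Tm F N} : ProdStep (β, t) (Tm.nt β) t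
  | inArg {pr : N × Tm F N} {f : F} {args : List (Tm F N)} {i : Nat} {a b : Tm F N} :
      args[i]? = some a → ProdStep pr a b → ProdStep pr (Tm.func f args) (Tm.func f (args.set i b))

/-- A rigid tree grammar: a set of rigid non-terminals, a start symbol and a set of
    productions.  (Taking `rigid = ∅` gives a plain regular tree grammar;
    `rigid = Set.univ` a totally rigid one.) -/
structure RTG (F N : Type) where
  rigid : Set N
  start : N
  prods : Set (N × Tm F N)

/-- A derivation of the term `t` in the grammar `G`: a sequence of terms starting with the
    start symbol and ending with `t`, each step rewriting by a production of `G`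
    (the list `prs` records which production is used at each step). -/
structure Deriv {F N : Type} (G : RTG F N) (t : Tm F N) where
  prs : List (N × Tm F N)
  seq : List (Tm F N)
  len : seq.length = prs.length + 1
  head : seq.head? = some (Tm.nt G.start)
  last : seq.getLast? = some t
  mem : ∀ pr ∈ prs, pr ∈ G.prods
  steps : ∀ (i : Nat) (a b : Tm F N) (pr : N × Tm F N),
      seq[i]? = some a → seq[i + 1]? = some b → prs[i]? = some pr → ProdStep pr a b

namespace Deriv

variable {F N : Type} {G : RTG F N} {t : Tm F N}

/-- `p` is a `β`-position of the derivation `D`. -/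
def IsPos (D : Deriv G t) (β : N) (p : List Nat) : Prop :=
  ∃ s ∈ D.seq, Tm.OccursAt β s p

/-- The rigidity condition: all positions at which a rigid non-terminal occurs during the
    derivation carry equal subterms of the final term. -/
def Rigid (D : Deriv G t) : Prop :=
  ∀ β ∈ G.rigid, ∀ p q, D.IsPos β p → D.IsPos β q → t.at? p = t.at? q

end Deriv

/-- The language of a rigid tree grammar: ground terms derivable from the start symbol by a
    derivation satisfying the rigidity condition. -/
def RTG.Lang {F N : Type} (G : RTG F N) : Set (Tm F N) :=
  { t | t.IsGround ∧ ∃ D : Deriv G t, D.Rigid }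

/-- The language of the underlying regular tree grammar (no rigidity condition). -/
def RTG.RegLang {F N : Type} (G : RTG F N) : Set (Tm F N) :=
  { t | t.IsGround ∧ Nonempty (Deriv G t) }

/-- One-step reachability between non-terminals: `α →_P β` iff some production `α → t` in `P`
    has `β` occurring in `t`. -/
def Reach {F N : Type} (P : Set (N × Tm F N)) (α β : N) : Prop :=
  ∃ t, (α, t) ∈ P ∧ Tm.Occurs β t

/-- A set of productions is acyclic if the transitive closure of `→_P` is irreflexive. -/
def Acyclic {F N : Type} (P : Set (N × Tm F N)) : Prop :=
  ∀ α, ¬ Relation.TransGen (Reach P) α α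

/-!
In a rigid derivation of a ground term `t`, all occurrences of a rigid non-terminal `β` end up
generating one and the same subterm `U β` of `t`, so the derivation describes a derivation tree in
which every `β`-node yields `U β`. Fix for each rigid `β` the root production `β → R β` of such a
tree for `β ⇒ U β` of minimal height. Replacing, by induction on height, the subtree at every
rigid `β`-node by that minimal tree gives a tree of the same kind which uses only `β → R β`.
Sequentialising it gives a derivation in which every rigid `β` still occurs only at positions
carrying `U β`, hence a rigid one.
-/

theorem List.Forall₂.exists_getElem?_of_getElem? {α β : Type*} {R : α → β → Prop}
    {l : List α} {m : List β} (h : List.Forall₂ R l m) {i : ℕ} {a : α} (ha : l[i]? = some a) :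
    ∃ b, m[i]? = some b ∧ R a b := by
  induction h generalizing i with
  | nil => simp at ha
  | cons hab _ ih =>
    cases i with
    | zero => cases ha; exact ⟨_, rfl, hab⟩
    | succ i => exact ih ha

theorem List.Forall₂.of_set {α β : Type*} {R : α → β → Prop} {a b : α} :
    ∀ {l : List α} {m : List β} {i : ℕ}, List.Forall₂ R (l.set i b) m → l[i]? = some a →
      (∀ c, m[i]? = some c → R b c → R a c) → List.Forall₂ R l m
  | _ :: _, _, 0, .cons hbc h, ha, hR => by cases ha; exact .cons (hR _ rfl hbc) h
  | _ :: _, _, _ + 1, .cons hxc h, ha, hR => .cons hxc (h.of_set ha hR)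

namespace Tm

variable {F N : Type}

theorem at?_nil (t : Tm F N) : t.at? [] = some t := by
  cases t <;> rw [at?]

theorem at?_func_cons {f : F} {args : List (Tm F N)} {i : ℕ} {a : Tm F N} {p : List ℕ}
    (h : args[i]? = some a) : (func f args).at? (i :: p) = a.at? p := by
  rw [at?, h]

theorem IsGround.not_occursAt {t : Tm F N} (ht : t.IsGround) {β : N} {p : List ℕ} :
    ¬ t.OccursAt β p := by
  intro h
  induction h with
  | here => cases ht
  | there ha _ ih =>
    cases ht with
    | func hargs => exact ih (hargs _ (List.mem_of_getElem? ha))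

end Tm

section Rewriting

variable {F N : Type}

theorem ProdStep.func_append_cons {pr : N × Tm F N} {a b : Tm F N} (h : ProdStep pr a b)
    (f : F) (pre post : List (Tm F N)) :
    ProdStep pr (.func f (pre ++ a :: post)) (.func f (pre ++ b :: post)) := by
  have := ProdStep.inArg (f := f) (i := pre.length) (args := pre ++ a :: post) (by simp) h
  rwa [List.set_append_right _ _ le_rfl, Nat.sub_self, List.set_cons_zero] at this

/-- `Rewrites a prs seq c`: rewriting `a` successively with the productions `prs` passes through
the terms `seq` (not including `a`) and ends in `c`. -/
inductive Rewrites : Tm F N → List (N × Tm F N) → List (Tm F N) → Tm F N → Prop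
  | nil (a : Tm F N) : Rewrites a [] [] a
  | cons {pr : N × Tm F N} {a b c : Tm F N} {prs : List (N × Tm F N)} {seq : List (Tm F N)} :
      ProdStep pr a b → Rewrites b prs seq c → Rewrites a (pr :: prs) (b :: seq) c

namespace Rewrites

variable {a b c : Tm F N} {prs prs' : List (N × Tm F N)} {seq seq' : List (Tm F N)}

theorem length_eq (h : Rewrites a prs seq c) : seq.length = prs.length := by
  induction h with
  | nil => rfl
  | cons _ _ ih => simp [ih]

theorem getLast?_cons (h : Rewrites a prs seq c) : (a :: seq).getLast? = some c := by
  induction h with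
  | nil => rfl
  | cons _ _ ih => rwa [List.getLast?_cons_cons]

theorem prodStep_of_getElem? (h : Rewrites a prs seq c) {i : ℕ} {x y : Tm F N}
    {pr : N × Tm F N} (hx : (a :: seq)[i]? = some x) (hy : (a :: seq)[i + 1]? = some y)
    (hpr : prs[i]? = some pr) : ProdStep pr x y := by
  induction h generalizing i with
  | nil => simp at hpr
  | cons hst _ ih =>
    cases i with
    | zero => cases hx; cases hy; cases hpr; exact hst
    | succ i => exact ih hx hy hpr

theorem append (h : Rewrites a prs seq b) (h' : Rewrites b prs' seq' c) :
    Rewrites a (prs ++ prs') (seq ++ seq') c := by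
  induction h with
  | nil => exact h'
  | cons hst _ ih => exact .cons hst (ih h')

theorem func_append_cons (h : Rewrites a prs seq c) (f : F) (pre post : List (Tm F N)) :
    Rewrites (.func f (pre ++ a :: post)) prs (seq.map fun x => .func f (pre ++ x :: post))
      (.func f (pre ++ c :: post)) := by
  induction h with
  | nil => exact .nil _
  | cons hst _ ih => exact .cons (hst.func_append_cons f pre post) ih

end Rewrites

end Rewriting

section Yields

variable {F N : Type} (P : N × Tm F N → Prop) (S : Set N) (U : N → Option (Tm F N))

def Compatible (x u : Tm F N) : Prop :=
  ∀ β ∈ S, ∀ p, x.OccursAt β p → u.at? p = U β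

/-- `Yields P S U n s u`: `s` has a derivation tree of height at most `n` with productions in
`P` and ground frontier `u`, in which every node labelled by a rigid `β ∈ S` generates `U β`. -/
def Yields : ℕ → Tm F N → Tm F N → Prop
  | 0, _, _ => False
  | n + 1, .nt β, u => ∃ s, P (β, s) ∧ (β ∈ S → U β = some u) ∧ Yields n s u
  | n + 1, .func f args, .func g us => f = g ∧ List.Forall₂ (Yields n) args us
  | _ + 1, .func _ _, .nt _ => False

def Derives (a c : Tm F N) : Prop :=
  ∃ prs seq, Rewrites a prs seq c ∧ (∀ pr ∈ prs, P pr) ∧ ∀ x ∈ a :: seq, Compatible S U x c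

variable {P S U}

namespace Compatible

theorem of_isGround {x : Tm F N} (hx : x.IsGround) (u : Tm F N) : Compatible S U x u :=
  fun _ _ _ h => (hx.not_occursAt h).elim

theorem nt_iff {β : N} {u : Tm F N} : Compatible S U (.nt β) u ↔ (β ∈ S → U β = some u) := by
  refine ⟨fun h hβ => ?_, fun h γ hγ p hp => ?_⟩
  · rw [← h β hβ [] .here, Tm.at?_nil]
  · cases hp
    rw [Tm.at?_nil, h hγ]

theorem func {f : F} {args us : List (Tm F N)} (h : List.Forall₂ (Compatible S U) args us) :
    Compatible S U (.func f args) (.func f us) := by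
  rintro β hβ _ (_ | ⟨ha, hp⟩)
  obtain ⟨c, hc, hac⟩ := h.exists_getElem?_of_getElem? ha
  rw [Tm.at?_func_cons hc]
  exact hac β hβ _ hp

theorem of_func {f : F} {args us : List (Tm F N)} {i : ℕ} {a c : Tm F N}
    (h : Compatible S U (.func f args) (.func f us)) (ha : args[i]? = some a)
    (hc : us[i]? = some c) : Compatible S U a c := fun β hβ p hp => by
  rw [← Tm.at?_func_cons hc]
  exact h β hβ _ (.there ha hp)

end Compatible

theorem Derives.compatible {a c : Tm F N} (h : Derives P S U a c) : Compatible S U a c := by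
  obtain ⟨_, _, _, _, hcomp⟩ := h
  exact hcomp a List.mem_cons_self

namespace Yields

variable {n : ℕ} {s u : Tm F N}

theorem succ (h : Yields P S U n s u) : Yields P S U (n + 1) s u := by
  induction n generalizing s u with
  | zero => exact h.elim
  | succ n ih =>
    match s, u, h with
    | .nt _, _, ⟨s, hP, hU, hs⟩ => exact ⟨s, hP, hU, ih hs⟩
    | .func _ _, .func _ _, ⟨hf, hargs⟩ => exact ⟨hf, hargs.imp fun _ _ => ih⟩

theorem mono {m : ℕ} (h : Yields P S U n s u) (hnm : n ≤ m) : Yields P S U m s u := by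
  induction hnm with
  | refl => exact h
  | step _ ih => exact ih.succ

theorem compatible (h : Yields P S U n s u) : Compatible S U s u := by
  induction n generalizing s u with
  | zero => exact h.elim
  | succ n ih =>
    match s, u, h with
    | .nt _, _, ⟨_, _, hU, _⟩ => exact Compatible.nt_iff.mpr hU
    | .func _ _, .func _ _, ⟨rfl, hargs⟩ => exact .func (hargs.imp fun _ _ => ih)

theorem isGround (h : Yields P S U n s u) : u.IsGround := by
  induction n generalizing s u with
  | zero => exact h.elim
  | succ n ih =>
    match s, u, h with
    | .nt _, _, ⟨_, _, _, hs⟩ => exact ih hs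
    | .func _ _, .func _ _, ⟨_, hargs⟩ =>
      refine .func fun c hc => ?_
      induction hargs with
      | nil => simp at hc
      | cons hac _ ihl => rcases List.mem_cons.mp hc with rfl | hc; exacts [ih hac, ihl hc]

theorem rigid_nt {β : N} (h : Yields P S U n (.nt β) u) (hβ : β ∈ S) : U β = some u :=
  Compatible.nt_iff.mp h.compatible hβ

end Yields

theorem exists_forall₂_yields {args us : List (Tm F N)}
    (h : List.Forall₂ (fun a c => ∃ n, Yields P S U n a c) args us) :
    ∃ n, List.Forall₂ (Yields P S U n) args us := by
  induction h with
  | nil => exact ⟨0, .nil⟩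
  | cons hac _ ih =>
    obtain ⟨⟨n, hn⟩, ⟨m, hm⟩⟩ := And.intro hac ih
    exact ⟨max n m, .cons (hn.mono (le_max_left n m))
      (hm.imp fun _ _ h => h.mono (le_max_right n m))⟩

theorem exists_yields_self {u : Tm F N} (hu : u.IsGround) : ∃ n, Yields P S U n u u := by
  induction hu with
  | @func f args _ ih =>
    obtain ⟨n, hn⟩ := exists_forall₂_yields (P := P) (S := S) (U := U) (List.forall₂_same.mpr ih)
    exact ⟨n + 1, rfl, hn⟩

theorem Yields.of_prodStep {pr : N × Tm F N} {a b : Tm F N} (hst : ProdStep pr a b) (hP : P pr)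
    {n : ℕ} {c : Tm F N} (hc : Compatible S U a c) (h : Yields P S U n b c) :
    ∃ m, Yields P S U m a c := by
  induction hst generalizing n c with
  | here => exact ⟨n + 1, _, hP, Compatible.nt_iff.mp hc, h⟩
  | inArg ha _ ih =>
    match n, c, h with
    | n + 1, .func _ us, ⟨rfl, hargs⟩ =>
      have hargs' : List.Forall₂ (fun a c => ∃ m, Yields P S U m a c) _ us :=
        (hargs.imp fun _ _ h => ⟨n, h⟩).of_set ha fun _ hc' ⟨_, h⟩ => ih hP (hc.of_func ha hc') h
      obtain ⟨m, hm⟩ := exists_forall₂_yields hargs'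
      exact ⟨m + 1, rfl, hm⟩

theorem Derives.func_append {f : F} {pre args us : List (Tm F N)}
    (hpre : ∀ u ∈ pre, u.IsGround)
    (h : List.Forall₂ (fun a c => Derives P S U a c ∧ c.IsGround) args us) :
    Derives P S U (.func f (pre ++ args)) (.func f (pre ++ us)) := by
  induction h generalizing pre with
  | nil =>
    exact ⟨[], [], .nil _, by simp, by simpa using Compatible.of_isGround (.func hpre) _⟩
  | @cons a c args us hac hrest ih =>
    obtain ⟨⟨prs, seq, hpath, hprs, hcomp⟩, hc⟩ := hac
    obtain ⟨prs', seq', hpath', hprs', hcomp'⟩ :=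
      ih (pre := pre ++ [c]) (by simpa [or_imp, forall_and] using And.intro hpre hc)
    simp only [List.append_assoc, List.singleton_append] at hpath' hcomp'
    have hrest' : List.Forall₂ (Compatible S U) args us :=
      hrest.imp fun _ _ h => h.1.compatible
    refine ⟨prs ++ prs', _, (hpath.func_append_cons f pre args).append hpath', ?_, ?_⟩
    · simpa [or_imp, forall_and] using And.intro hprs hprs'
    · have hlift : ∀ x ∈ a :: seq,
          Compatible S U (.func f (pre ++ x :: args)) (.func f (pre ++ c :: us)) := fun x hx =>
        .func (List.rel_append (List.forall₂_same.mpr fun u hu => .of_isGround (hpre u hu) u)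
          (.cons (hcomp x hx) hrest'))
      simp only [List.mem_cons, List.mem_append, List.mem_map] at hlift hcomp' ⊢
      rintro x (rfl | ⟨y, hy, rfl⟩ | hx)
      · exact hlift a (.inl rfl)
      · exact hlift y (.inr hy)
      · exact hcomp' x (.inr hx)

theorem Yields.derives {n : ℕ} {s u : Tm F N} (h : Yields P S U n s u) : Derives P S U s u := by
  induction n generalizing s u with
  | zero => exact h.elim
  | succ n ih =>
    match s, u, h with
    | .nt β, _, ⟨s, hP, hU, hs⟩ =>
      obtain ⟨prs, seq, hpath, hprs, hcomp⟩ := ih hs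
      refine ⟨(β, s) :: prs, s :: seq, .cons .here hpath, ?_, ?_⟩
      · simpa using And.intro hP hprs
      · simpa using And.intro (Compatible.nt_iff.mpr hU) hcomp
    | .func _ _, .func _ _, ⟨rfl, hargs⟩ =>
      simpa using Derives.func_append (pre := []) (by simp)
        (hargs.imp fun _ _ hac => ⟨ih hac, hac.isGround⟩)

/-- The root production of a tree of minimal height for `β`; it serves every `u`, as a rigid `β`
can only yield `U β`. -/
theorem exists_minimal_rhs (β : N) :
    ∃ r, β ∈ S → ∀ n u, Yields P S U n (.nt β) u → P (β, r) ∧ ∃ m < n, Yields P S U m r u := by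
  classical
  by_cases h : β ∈ S ∧ ∃ n u, Yields P S U n (.nt β) u
  · obtain ⟨hβ, hex⟩ := h
    obtain ⟨u₀, h₀⟩ := Nat.find_spec hex
    have hmin : ∀ n u, Yields P S U n (.nt β) u → Nat.find hex ≤ n :=
      fun n u hnu => Nat.find_min' hex ⟨u, hnu⟩
    revert h₀ hmin
    match Nat.find hex with
    | 0 => exact fun h₀ => h₀.elim
    | k + 1 =>
      rintro ⟨r, hP, hU, hr⟩ hmin
      refine ⟨r, fun _ n u hnu => ⟨hP, k, hmin n u hnu, ?_⟩⟩
      obtain rfl : u = u₀ := Option.some.inj ((hnu.rigid_nt hβ).symm.trans (hU hβ))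
      exact hr
  · exact ⟨.nt β, fun hβ n u hnu => (h ⟨hβ, n, u, hnu⟩).elim⟩

theorem Yields.restrict_rhs {R : N → Tm F N}
    (hR : ∀ β, β ∈ S → ∀ n u, Yields P S U n (.nt β) u →
      P (β, R β) ∧ ∃ m < n, Yields P S U m (R β) u)
    {n : ℕ} {s u : Tm F N} (h : Yields P S U n s u) :
    Yields (fun pr => P pr ∧ (pr.1 ∈ S → pr.2 = R pr.1)) S U n s u := by
  induction n using Nat.strong_induction_on generalizing s u with
  | _ n ih =>
    match n, s, u, h with
    | n + 1, .nt β, u, ⟨s, hP, hU, hs⟩ =>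
      by_cases hβ : β ∈ S
      · obtain ⟨hPR, m, hm, hRu⟩ := hR β hβ (n + 1) u ⟨s, hP, hU, hs⟩
        exact ⟨R β, ⟨hPR, fun _ => rfl⟩, hU, (ih m hm hRu).mono (by omega)⟩
      · exact ⟨s, ⟨hP, fun h => absurd h hβ⟩, hU, ih n (by omega) hs⟩
    | n + 1, .func _ _, .func _ _, ⟨hf, hargs⟩ =>
      exact ⟨hf, hargs.imp fun _ _ => ih n (by omega)⟩

end Yields

namespace Deriv

variable {F N : Type} {G : RTG F N} {t : Tm F N}

theorem Rigid.exists_compatible {D : Deriv G t} (hD : D.Rigid) :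
    ∃ U, ∀ x ∈ D.seq, Compatible G.rigid U x t := by
  have hU : ∀ β, ∃ o, ∀ p, β ∈ G.rigid → D.IsPos β p → t.at? p = o := fun β => by
    by_cases h : ∃ p, β ∈ G.rigid ∧ D.IsPos β p
    · obtain ⟨p₀, hβ, hp₀⟩ := h
      exact ⟨t.at? p₀, fun p _ hp => hD β hβ p p₀ hp hp₀⟩
    · exact ⟨none, fun p hβ hp => (h ⟨p, hβ, hp⟩).elim⟩
  choose U hU using hU
  exact ⟨U, fun x hx β hβ p hp => hU β p hβ ⟨x, hx, hp⟩⟩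

theorem rigid_of_compatible {D : Deriv G t} {U : N → Option (Tm F N)}
    (hc : ∀ x ∈ D.seq, Compatible G.rigid U x t) : D.Rigid := by
  rintro β hβ p q ⟨x, hx, hp⟩ ⟨y, hy, hq⟩
  rw [hc x hx β hβ p hp, hc y hy β hβ q hq]

theorem exists_yields (D : Deriv G t) (hg : t.IsGround) {U : N → Option (Tm F N)}
    (hc : ∀ x ∈ D.seq, Compatible G.rigid U x t) :
    ∃ n, Yields (· ∈ G.prods) G.rigid U n (.nt G.start) t := by
  suffices h : ∀ j k x, k + j = D.prs.length → D.seq[k]? = some x →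
      ∃ n, Yields (· ∈ G.prods) G.rigid U n x t from
    h _ 0 _ (zero_add _) (by rw [← List.head?_eq_getElem?]; exact D.head)
  intro j
  induction j with
  | zero =>
    intro k x hk hx
    have hlast : D.seq.getLast? = some x := by
      rw [List.getLast?_eq_getElem?, D.len]; simpa [← hk] using hx
    obtain rfl : x = t := Option.some.inj (hlast.symm.trans D.last)
    exact exists_yields_self hg
  | succ j ih =>
    intro k x hk hx
    have hy := List.getElem?_eq_getElem (l := D.seq) (i := k + 1) (by rw [D.len]; omega)
    have hpr := List.getElem?_eq_getElem (l := D.prs) (i := k) (by omega)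
    obtain ⟨n, hn⟩ := ih (k + 1) _ (by omega) hy
    exact Yields.of_prodStep (D.steps k x _ _ hx hy hpr) (D.mem _ (List.mem_of_getElem? hpr))
      (hc x (List.mem_of_getElem? hx)) hn

end Deriv

theorem Rewrites.exists_deriv {F N : Type} {G : RTG F N} {t : Tm F N}
    {prs : List (N × Tm F N)} {seq : List (Tm F N)} (h : Rewrites (.nt G.start) prs seq t)
    (hprs : ∀ pr ∈ prs, pr ∈ G.prods) :
    ∃ D : Deriv G t, D.prs = prs ∧ D.seq = .nt G.start :: seq :=
  ⟨⟨prs, _, by simp [h.length_eq], rfl, h.getLast?_cons, hprs,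
    fun _ _ _ _ => h.prodStep_of_getElem?⟩, rfl, rfl⟩

/-- every term in the language of a rigid tree grammar has a rigid derivation
    that uses at most one production for each rigid non-terminal. -/
theorem rigid_derivation_unique_productions {F N : Type} (G : RTG F N) (t : Tm F N)
    (ht : t ∈ G.Lang) :
    ∃ D : Deriv G t, D.Rigid ∧
      ∀ β ∈ G.rigid, ∀ s₁ s₂ : Tm F N, (β, s₁) ∈ D.prs → (β, s₂) ∈ D.prs → s₁ = s₂ := by
  obtain ⟨hg, D, hD⟩ := ht
  obtain ⟨U, hU⟩ := hD.exists_compatible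
  obtain ⟨n, hn⟩ := D.exists_yields hg hU
  choose R hR using exists_minimal_rhs (P := (· ∈ G.prods)) (S := G.rigid) (U := U)
  obtain ⟨prs, seq, hpath, hprs, hcomp⟩ := (hn.restrict_rhs hR).derives
  obtain ⟨D', rfl, hseq⟩ := hpath.exists_deriv fun pr hpr => (hprs pr hpr).1
  refine ⟨D', Deriv.rigid_of_compatible (hseq ▸ hcomp), fun β hβ s₁ s₂ h₁ h₂ => ?_⟩
  exact ((hprs _ h₁).2 hβ).trans ((hprs _ h₂).2 hβ).symm
end

section
/- In a totally rigid acyclic tree grammar G with non-terminals topologically ordered as α₁,…,αₙ (α₁ the start symbol), rearranging any derivation of a ground term t so that productions are applied in order of increasing index of their left-hand non-terminal yields again a valid derivation of t satisfying the rigidity condition. -/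
/-! Bubble-sort the derivation. If step `i` rewrites `α` and step `i + 1` rewrites `β < α`, then
`β` does not occur in the right-hand side used at step `i` (that would give `α →_P β`, so
`α < β`); hence the `β` rewritten at step `i + 1` was already present before step `i`, and the
two steps commute. Every non-terminal occurrence in the new intermediate term already occurs at
the same position in one of its neighbours, so no new positions arise and rigidity is inherited.
Each such swap lowers the number of inversions of the sequence of left-hand sides. -/

namespace Tm

variable {F N : Type}

theorem occursAt_func_set {β : N} {f : F} {args : List (Tm F N)} {j : ℕ} {y : Tm F N}
    {r : List ℕ} (h : OccursAt β (func f (args.set j y)) r) :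
    (∃ r', r = j :: r' ∧ OccursAt β y r') ∨ OccursAt β (func f args) r := by
  cases h with | @there _ _ k z r' hk hz =>
  by_cases hkj : k = j
  · subst hkj
    obtain ⟨_, rfl⟩ := List.getElem?_eq_some_iff.1 hk
    exact Or.inl ⟨r', rfl, by simpa using hz⟩
  · rw [List.getElem?_set_ne (Ne.symm hkj)] at hk
    exact Or.inr (.there hk hz)

end Tm

namespace ProdStep

variable {F N : Type} {pr pr' : N × Tm F N} {a b c : Tm F N}

theorem occurs (h : ProdStep pr a b) : Tm.Occurs pr.1 a := by
  induction h with
  | here => exact ⟨[], .here⟩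
  | inArg hget _ ih =>
    obtain ⟨p, hp⟩ := ih
    exact ⟨_ :: p, .there hget hp⟩

theorem func_set {f : F} {args : List (Tm F N)} {j : ℕ} (hj : j < args.length)
    (h : ProdStep pr a b) : ProdStep pr (.func f (args.set j a)) (.func f (args.set j b)) := by
  simpa using ProdStep.inArg (f := f) (List.getElem?_set_self (a := a) hj) h

theorem swap (h₁ : ProdStep pr a b) (h₂ : ProdStep pr' b c) (hno : ¬ Tm.Occurs pr'.1 pr.2) :
    ∃ d, ProdStep pr' a d ∧ ProdStep pr d c ∧
      ∀ β r, Tm.OccursAt β d r → Tm.OccursAt β a r ∨ Tm.OccursAt β c r := by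
  induction h₁ generalizing c with
  | here => exact absurd h₂.occurs hno
  | @inArg _ f args i a' b' hget hstep ih =>
    cases h₂ with | @inArg _ _ _ j x y hget₂ hstep₂ =>
    have hi : i < args.length := (List.getElem?_eq_some_iff.1 hget).1
    by_cases hji : j = i
    · subst hji
      rw [List.getElem?_set_self hi, Option.some_inj] at hget₂
      subst hget₂
      obtain ⟨d, hd₁, hd₂, hocc⟩ := ih hstep₂ hno
      refine ⟨.func f (args.set j d), .inArg hget hd₁, by simpa using hd₂.func_set hi, ?_⟩
      intro β r hr
      rcases Tm.occursAt_func_set hr with ⟨r', rfl, hr'⟩ | hr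
      · rcases hocc β r' hr' with h | h
        · exact Or.inl (.there hget h)
        · exact Or.inr (.there (List.getElem?_set_self (by simpa using hi)) h)
      · exact Or.inl hr
    · rw [List.getElem?_set_ne (Ne.symm hji)] at hget₂
      have hj : j < args.length := (List.getElem?_eq_some_iff.1 hget₂).1
      refine ⟨.func f (args.set j y), .inArg hget₂ hstep₂, ?_, ?_⟩
      · rw [List.set_comm _ _ (Ne.symm hji)]
        exact .inArg (by rwa [List.getElem?_set_ne hji]) hstep
      · intro β r hr
        rcases Tm.occursAt_func_set hr with ⟨r', rfl, hr'⟩ | hr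
        · exact Or.inr (.there (List.getElem?_set_self (by simpa using hj)) hr')
        · exact Or.inl hr

end ProdStep

namespace List

variable {α β : Type*}

def invCount [LinearOrder β] : List β → ℕ
  | [] => 0
  | a :: l => l.countP (· < a) + invCount l

theorem perm_swapAdjacent : ∀ (l : List α) (i : ℕ) (h : i + 1 < l.length),
    ((l.set i l[i + 1]).set (i + 1) l[i]).Perm l
  | x :: y :: tl, 0, _ => by simpa using Perm.swap x y tl
  | x :: tl, i + 1, h => by simpa using (perm_swapAdjacent tl i (by simpa using h)).cons x

theorem invCount_swapAdjacent_lt [LinearOrder β] :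
    ∀ (l : List β) (i : ℕ) (h : i + 1 < l.length), l[i + 1] < l[i] →
      invCount ((l.set i l[i + 1]).set (i + 1) l[i]) < invCount l
  | x :: y :: tl, 0, _, hlt => by
    simp only [getElem_cons_zero, getElem_cons_succ] at hlt
    simp only [zero_add, getElem_cons_succ, getElem_cons_zero, set_cons_zero, set_cons_succ,
      invCount, not_lt.mpr hlt.le, decide_false, Bool.false_eq_true, not_false_eq_true,
      countP_cons_of_neg, hlt, decide_true, countP_cons_of_pos]
    omega
  | x :: tl, i + 1, h, hlt => by
    have h' : i + 1 < tl.length := by simpa using h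
    have hcount := (perm_swapAdjacent tl i h').countP_eq (· < x)
    have := invCount_swapAdjacent_lt tl i h' hlt
    simp only [set_cons_succ, getElem_cons_succ, invCount] at hcount this ⊢
    omega

theorem exists_perm_pairwise_of_swapAdjacent [LinearOrder β] (f : α → β) (S : Set (List α))
    (hS : ∀ l ∈ S, ∀ i (h : i + 1 < l.length), f l[i + 1] < f l[i] →
      (l.set i l[i + 1]).set (i + 1) l[i] ∈ S)
    {l : List α} (hl : l ∈ S) : ∃ l' ∈ S, l'.Perm l ∧ (l'.map f).Pairwise (· ≤ ·) := by
  induction hm : invCount (l.map f) using Nat.strong_induction_on generalizing l with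
  | _ m IH =>
    by_cases hsorted : (l.map f).Pairwise (· ≤ ·)
    · exact ⟨l, hl, Perm.refl l, hsorted⟩
    obtain ⟨i, hi, hlt⟩ : ∃ i, ∃ hi : i + 1 < l.length, f l[i + 1] < f l[i] := by
      rw [← isChain_iff_pairwise, isChain_iff_getElem] at hsorted
      simp only [not_forall, not_le] at hsorted
      obtain ⟨i, hi, hlt⟩ := hsorted
      exact ⟨i, by simpa using hi, by simpa using hlt⟩
    have hdec : invCount (((l.set i l[i + 1]).set (i + 1) l[i]).map f) < m := by
      have := invCount_swapAdjacent_lt (l.map f) i (by simpa using hi) (by simpa using hlt)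
      simpa [hm, map_set] using this
    obtain ⟨l', hl', hperm, hsorted'⟩ := IH _ hdec (hS l hl i hi hlt) rfl
    exact ⟨l', hl', hperm.trans (perm_swapAdjacent l i hi), hsorted'⟩

end List

namespace Deriv

variable {F N : Type} {G : RTG F N} {t : Tm F N}

def swapAt (D : Deriv G t) (i : ℕ) (hi : i + 1 < D.prs.length) (d : Tm F N)
    (h₁ : ProdStep D.prs[i + 1] (D.seq[i]'(by have := D.len; omega)) d)
    (h₂ : ProdStep D.prs[i] d (D.seq[i + 2]'(by have := D.len; omega))) : Deriv G t where
  prs := (D.prs.set i D.prs[i + 1]).set (i + 1) D.prs[i]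
  seq := D.seq.set (i + 1) d
  len := by simp [D.len]
  head := by
    rw [List.head?_eq_getElem?, List.getElem?_set_ne (by omega), ← List.head?_eq_getElem?]
    exact D.head
  last := by
    rw [List.getLast?_eq_getElem?, List.length_set, List.getElem?_set_ne (by have := D.len; omega),
      ← List.getLast?_eq_getElem?]
    exact D.last
  mem pr hpr := by
    rcases List.mem_or_eq_of_mem_set hpr with hpr | rfl
    · rcases List.mem_or_eq_of_mem_set hpr with hpr | rfl
      · exact D.mem pr hpr
      · exact D.mem _ (List.getElem_mem hi)
    · exact D.mem _ (List.getElem_mem (by omega))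
  steps k x y pr hx hy hpr := by
    have hlen := D.len
    have hk : k < D.prs.length := by
      by_contra hk
      rw [List.getElem?_eq_none (by simp; omega)] at hpr
      cases hpr
    by_cases hki : k = i
    · subst hki
      rw [List.getElem?_set_ne (by omega), List.getElem?_eq_getElem (by omega)] at hx
      rw [List.getElem?_set_self (by omega)] at hy
      rw [List.getElem?_set_ne (by omega), List.getElem?_set_self (by omega)] at hpr
      cases hx; cases hy; cases hpr
      exact h₁
    by_cases hki' : k = i + 1
    · subst hki'
      rw [List.getElem?_set_self (by omega)] at hx
      rw [List.getElem?_set_ne (by omega), List.getElem?_eq_getElem (by omega)] at hy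
      rw [List.getElem?_set_self (by simp; omega)] at hpr
      cases hx; cases hy; cases hpr
      exact h₂
    rw [List.getElem?_set_ne (by omega)] at hx hy
    rw [List.getElem?_set_ne (by omega), List.getElem?_set_ne (by omega)] at hpr
    exact D.steps k x y pr hx hy hpr

theorem Rigid.of_isPos {D D' : Deriv G t} (hD : D.Rigid)
    (hpos : ∀ β p, D'.IsPos β p → D.IsPos β p) : D'.Rigid :=
  fun β hβ p q hp hq => hD β hβ p q (hpos β p hp) (hpos β q hq)

theorem Rigid.exists_swapAdjacent [Preorder N] (horder : ∀ α β, Reach G.prods α β → α < β)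
    {D : Deriv G t} (hD : D.Rigid) (i : ℕ) (hi : i + 1 < D.prs.length)
    (hlt : D.prs[i + 1].1 < D.prs[i].1) :
    ∃ D' : Deriv G t, D'.Rigid ∧ D'.prs = (D.prs.set i D.prs[i + 1]).set (i + 1) D.prs[i] := by
  have hlen := D.len
  have step (k : ℕ) (hk : k < D.prs.length) :
      ProdStep D.prs[k] (D.seq[k]'(by omega)) (D.seq[k + 1]'(by omega)) :=
    D.steps k _ _ _ (List.getElem?_eq_getElem _) (List.getElem?_eq_getElem _)
      (List.getElem?_eq_getElem _)
  have hno : ¬ Tm.Occurs D.prs[i + 1].1 D.prs[i].2 := fun hocc =>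
    (horder _ _ ⟨_, D.mem _ (List.getElem_mem _), hocc⟩).asymm hlt
  obtain ⟨d, hd₁, hd₂, hocc⟩ := (step i (by omega)).swap (step (i + 1) hi) hno
  refine ⟨D.swapAt i hi d hd₁ hd₂, hD.of_isPos ?_, rfl⟩
  rintro β p ⟨s, hs, hsp⟩
  rcases List.mem_or_eq_of_mem_set hs with hs | rfl
  · exact ⟨s, hs, hsp⟩
  · obtain h | h := hocc β p hsp <;> exact ⟨_, List.getElem_mem _, h⟩

end Deriv

theorem rearrange_derivation_sorted_general {F : Type} {n : ℕ} (G : RTG F (Fin n))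
    (horder : ∀ i j : Fin n, Reach G.prods i j → i < j)
    (t : Tm F (Fin n)) (D : Deriv G t) (hD : D.Rigid) :
    ∃ D' : Deriv G t, D'.Rigid ∧ D'.prs.Perm D.prs ∧
      (D'.prs.map Prod.fst).Pairwise (· ≤ ·) := by
  obtain ⟨_, ⟨D', hD', rfl⟩, hperm, hsorted⟩ :=
    List.exists_perm_pairwise_of_swapAdjacent Prod.fst {l | ∃ D' : Deriv G t, D'.Rigid ∧ D'.prs = l}
      (by
        rintro _ ⟨D, hD, rfl⟩ i hi hlt
        exact hD.exists_swapAdjacent horder i hi hlt)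
      ⟨D, hD, rfl⟩
  exact ⟨D', hD', hperm, hsorted⟩

/-- in a totally rigid acyclic tree grammar with topologically ordered
    non-terminals, any rigid derivation of a ground term t can be rearranged (the list of
    applied productions permuted into order of increasing index of the left-hand
    non-terminal), yielding again a valid rigid derivation of t. -/
theorem rearrange_derivation_sorted {F : Type} {n : ℕ} (G : RTG F (Fin n))
    (hrig : G.rigid = Set.univ)
    (horder : ∀ i j : Fin n, Reach G.prods i j → i < j)
    (t : Tm F (Fin n)) (hg : t.IsGround) (D : Deriv G t) (hD : D.Rigid) :
    ∃ D' : Deriv G t, D'.Rigid ∧ D'.prs.Perm D.prs ∧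
      (D'.prs.map Prod.fst).Pairwise (· ≤ ·) :=
  rearrange_derivation_sorted_general G horder t D hD
end

section
/- Let P₁ and P₂ be acyclic sets of productions over disjoint sets of non-terminals N₁ and N₂ respectively (i.e., left-hand sides of P₁ lie in N₁, of P₂ in N₂), and let P_r be a set of productions whose left-hand sides lie in N₁ and whose right-hand sides contain non-terminals only from N₂ (or vice versa, symmetrically). Then P₁ ∪ P₂ ∪ P_r is acyclic. -/
private lemma acyclic_union_aux {F N : Type} (N₁ N₂ : Set N) (hdisj : Disjoint N₁ N₂)
    (P₁ P₂ Pr : Set (N × Tm F N))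
    (hP₁ : ∀ p ∈ P₁, p.1 ∈ N₁ ∧ ∀ β, Tm.Occurs β p.2 → β ∈ N₁)
    (hP₂ : ∀ p ∈ P₂, p.1 ∈ N₂ ∧ ∀ β, Tm.Occurs β p.2 → β ∈ N₂)
    (hPr : ∀ p ∈ Pr, p.1 ∈ N₁ ∧ ∀ β, Tm.Occurs β p.2 → β ∈ N₂)
    (h₁ : Acyclic P₁) (h₂ : Acyclic P₂) :
    Acyclic (P₁ ∪ P₂ ∪ Pr) := by
  have hnot : ∀ x, x ∈ N₁ → x ∉ N₂ := fun x hx hx' =>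
    Set.disjoint_left.mp hdisj hx hx'
  have key : ∀ α β, Relation.TransGen (Reach (P₁ ∪ P₂ ∪ Pr)) α β →
      (Relation.TransGen (Reach P₁) α β ∧ α ∈ N₁ ∧ β ∈ N₁) ∨
      (Relation.TransGen (Reach P₂) α β ∧ α ∈ N₂ ∧ β ∈ N₂) ∨
      (α ∈ N₁ ∧ β ∈ N₂) := by
    intro α β h
    induction h with
    | single hstep =>
      obtain ⟨t, (hm | hm) | hm, hocc⟩ := hstep
      · exact Or.inl ⟨Relation.TransGen.single ⟨t, hm, hocc⟩,
          (hP₁ _ hm).1, (hP₁ _ hm).2 _ hocc⟩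
      · exact Or.inr <| Or.inl ⟨Relation.TransGen.single ⟨t, hm, hocc⟩,
          (hP₂ _ hm).1, (hP₂ _ hm).2 _ hocc⟩
      · exact Or.inr <| Or.inr ⟨(hPr _ hm).1, (hPr _ hm).2 _ hocc⟩
    | tail _ hstep ih =>
      rename_i β' γ _
      obtain ⟨t, hm, hocc⟩ := hstep
      rcases ih with ⟨htg, hα, hβ⟩ | ⟨htg, hα, hβ⟩ | ⟨hα, hβ⟩
      · rcases hm with (hm | hm) | hm
        · exact Or.inl ⟨htg.tail ⟨t, hm, hocc⟩, hα, (hP₁ _ hm).2 _ hocc⟩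
        · exact absurd (hP₂ _ hm).1 (hnot _ hβ)
        · exact Or.inr <| Or.inr ⟨hα, (hPr _ hm).2 _ hocc⟩
      · rcases hm with (hm | hm) | hm
        · exact absurd (hP₁ _ hm).1 (fun h => hnot _ h hβ)
        · exact Or.inr <| Or.inl ⟨htg.tail ⟨t, hm, hocc⟩, hα, (hP₂ _ hm).2 _ hocc⟩
        · exact absurd (hPr _ hm).1 (fun h => hnot _ h hβ)
      · rcases hm with (hm | hm) | hm
        · exact absurd (hP₁ _ hm).1 (fun h => hnot _ h hβ)
        · exact Or.inr <| Or.inr ⟨hα, (hP₂ _ hm).2 _ hocc⟩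
        · exact absurd (hPr _ hm).1 (fun h => hnot _ h hβ)
  intro α h
  rcases key α α h with ⟨htg, _, _⟩ | ⟨htg, _, _⟩ | ⟨hα₁, hα₂⟩
  · exact h₁ α htg
  · exact h₂ α htg
  · exact hnot _ hα₁ hα₂

/-- the union of two acyclic production sets over disjoint non-terminal sets,
    together with productions leading from one side to the other, is acyclic. -/
theorem acyclic_union {F N : Type} (N₁ N₂ : Set N) (hdisj : Disjoint N₁ N₂)
    (P₁ P₂ Pr : Set (N × Tm F N))
    (hP₁ : ∀ p ∈ P₁, p.1 ∈ N₁ ∧ ∀ β, Tm.Occurs β p.2 → β ∈ N₁)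
    (hP₂ : ∀ p ∈ P₂, p.1 ∈ N₂ ∧ ∀ β, Tm.Occurs β p.2 → β ∈ N₂)
    (hPr : (∀ p ∈ Pr, p.1 ∈ N₁ ∧ ∀ β, Tm.Occurs β p.2 → β ∈ N₂) ∨
           (∀ p ∈ Pr, p.1 ∈ N₂ ∧ ∀ β, Tm.Occurs β p.2 → β ∈ N₁))
    (h₁ : Acyclic P₁) (h₂ : Acyclic P₂) :
    Acyclic (P₁ ∪ P₂ ∪ Pr) := by
  rcases hPr with hPr | hPr
  · exact acyclic_union_aux N₁ N₂ hdisj P₁ P₂ Pr hP₁ hP₂ hPr h₁ h₂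
  · have := acyclic_union_aux N₂ N₁ hdisj.symm P₂ P₁ Pr hP₂ hP₁ hPr h₂ h₁
    rwa [Set.union_comm P₂ P₁] at this
end
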